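/- In the counterclockwise control Lag system R_p, for any starting string (s₁,blank)...(s_{n-1},p)(sₙ,blank) with n ≥ 3 and any j with 1 ≤ j ≤ n−1, after j(n−1) iterations the control token p is located at position s_{n-1-j mod n} (indices cyclic), and all other control symbols are blank; i.e., the p token advances exactly one position counterclockwise per block of n−1 iterations. -/

import Mathlib

namespace Stmt17

/-- Control symbols: blank or the pulse token `p`. -/
inductive Ctl | blank | p
deriving DecidableEq

/-- The rule set `R_p`, acting on control coordinates:
`blank·blank → blank`, `blank·p → p`, `p·blank → blank`. -/
def rc : Ctl → Ctl → Option Ctl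
  | .blank, .blank => some .blank
  | .blank, .p => some .p
  | .p, .blank => some .blank
  | _, _ => none

/-- One Lag iteration with context length 2: match the control symbols of the
first two pairs, delete the first pair, append a pair with the first pair's
data symbol and the rule's output control symbol; halt (`none`) if no rule matches. -/
def step {α : Type*} (r : Ctl → Ctl → Option Ctl) :
    List (α × Ctl) → Option (List (α × Ctl))
  | (x, a) :: (y, b) :: rest => (r a b).map fun c => (y, b) :: rest ++ [(x, c)]
  | _ => none

/-- `k` iterations of the Lag system. -/
def iterL {α : Type*} (r : Ctl → Ctl → Option Ctl) :
    ℕ → List (α × Ctl) → Option (List (α × Ctl))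
  | 0, s => some s
  | k + 1, s => (step r s).bind (iterL r k)

end Stmt17

/-! Write `pulseConfig D` for the data `D` with `p` on its second-to-last pair. During `n - 1`
iterations the leading blanks travel unchanged to the back, and then `blank·p → p`,
`p·blank → blank` hand the token one pair to the left: the result is `pulseConfig` of `D`
rotated by `n - 1`. After `j` such blocks the data is rotated by `j(n - 1) ≡ n - j (mod n)`. -/

namespace Stmt17

variable {α : Type*}

theorem iterL_add (r : Ctl → Ctl → Option Ctl) (a b : ℕ) (s : List (α × Ctl)) :
    iterL r (a + b) s = (iterL r a s).bind (iterL r b) := by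
  induction a generalizing s with
  | zero => rw [Nat.zero_add]; rfl
  | succ a ih =>
    rw [Nat.add_right_comm, iterL, iterL, Option.bind_assoc]
    exact congrArg _ (funext ih)

theorem iterL_blank_run (B : List α) (z : α) (T : List (α × Ctl)) :
    iterL rc B.length (B.map (·, Ctl.blank) ++ (z, Ctl.blank) :: T) =
      some ((z, Ctl.blank) :: T ++ B.map (·, Ctl.blank)) := by
  induction B generalizing T with
  | nil => simp [iterL]
  | cons b B ih =>
    have hstep : step rc ((b :: B).map (·, Ctl.blank) ++ (z, Ctl.blank) :: T) =
        some (B.map (·, Ctl.blank) ++ (z, Ctl.blank) :: (T ++ [(b, Ctl.blank)])) := by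
      cases B <;> simp [step, rc]
    rw [List.length_cons, iterL, hstep, Option.bind_some, ih]
    simp

def pulseConfig (D : List α) : List (α × Ctl) :=
  D.mapIdx fun i a => (a, if i = D.length - 2 then Ctl.p else Ctl.blank)

theorem mapIdx_eq_map_of_length_le (B : List α) (k : ℕ) (hk : B.length ≤ k) :
    B.mapIdx (fun i a => (a, if i = k then Ctl.p else Ctl.blank)) = B.map (·, Ctl.blank) :=
  List.ext_getElem (by simp) fun i hi _ => by
    simp only [List.length_mapIdx] at hi
    simp [show i ≠ k by omega]

theorem pulseConfig_append_pair (B : List α) (x y : α) :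
    pulseConfig (B ++ [x, y]) = B.map (·, Ctl.blank) ++ [(x, Ctl.p), (y, Ctl.blank)] := by
  simp [pulseConfig, List.mapIdx_append, mapIdx_eq_map_of_length_le]

theorem iterL_pulseConfig (D : List α) (hD : 3 ≤ D.length) :
    iterL rc (D.length - 1) (pulseConfig D) =
      some (pulseConfig (D.rotate (D.length - 1))) := by
  obtain ⟨B, z, x, y, rfl⟩ : ∃ B z x y, D = B ++ [z, x, y] := by
    obtain ⟨z, x, y, hzxy⟩ := List.length_eq_three.mp
      (show (D.drop (D.length - 3)).length = 3 by simp; omega)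
    exact ⟨_, z, x, y, hzxy ▸ (List.take_append_drop _ D).symm⟩
  have hrot : (B ++ [z, x, y]).rotate (B.length + 2) = (y :: B) ++ [z, x] := by
    simpa using (B ++ [z, x]).rotate_append_length_eq [y]
  have hlen : (B ++ [z, x, y]).length - 1 = B.length + 2 := by simp
  rw [hlen, hrot, pulseConfig_append_pair, show B ++ [z, x, y] = (B ++ [z]) ++ [x, y] by simp,
    pulseConfig_append_pair, iterL_add, List.map_append, List.append_assoc, List.map_singleton,
    List.singleton_append, iterL_blank_run]
  simp [iterL, step, rc]

theorem iterL_mul_pulseConfig (D : List α) (hD : 3 ≤ D.length) (j : ℕ) :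
    iterL rc (j * (D.length - 1)) (pulseConfig D) =
      some (pulseConfig (D.rotate (j * (D.length - 1)))) := by
  induction j with
  | zero => simp [iterL]
  | succ j ih =>
    have hblock := iterL_pulseConfig (D.rotate (j * (D.length - 1))) (by simpa using hD)
    rw [List.length_rotate, List.rotate_rotate] at hblock
    rw [Nat.succ_mul, iterL_add, ih, Option.bind_some, hblock]

theorem pulseConfig_ofFn {n : ℕ} (s : Fin n → α) :
    pulseConfig (List.ofFn s) =
      List.ofFn fun i : Fin n => (s i, if i.val = n - 2 then Ctl.p else Ctl.blank) :=
  List.ext_getElem (by simp [pulseConfig]) fun i _ _ => by simp [pulseConfig]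

theorem ofFn_rotate {n : ℕ} (s : Fin n → α) (k : ℕ) :
    (List.ofFn s).rotate k = List.ofFn fun i : Fin n => s ⟨(i + k) % n, Nat.mod_lt _ i.pos⟩ :=
  List.ext_getElem (by simp) fun i _ _ => by simp [List.getElem_rotate]

theorem add_mul_pred_mod {n j : ℕ} (i : ℕ) (hj : j ≤ n) :
    (i + j * (n - 1)) % n = (i + (n - j)) % n := by
  rw [← Nat.add_mod_right, ← Nat.add_mul_mod_self_right (i + (n - j)) j]
  have hjn : j * (n - 1) + j = j * n := by
    cases n with
    | zero => simpa using hj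
    | succ m => simp [Nat.mul_succ]
  congr 1
  omega

end Stmt17

open Stmt17 in
/-- In the Lag system `R_p`, starting from
`(s₁,blank)...(s_{n-2},blank)(s_{n-1},p)(sₙ,blank)` with `n ≥ 3`:
for any `1 ≤ j ≤ n−1`, after `j(n−1)` iterations the memory string is the
`j`-fold counterclockwise data rotation with the single control token `p`
attached to the data symbol `s_{n-1-j}` (indices cyclic, i.e. at position
`(n−2)+(n−j) mod n` of the original string) and all other control symbols
blank: the `p` token advances exactly one position counterclockwise per block
of `n−1` iterations. -/
theorem stmt17 {α : Type*} (n : ℕ) (hn : 3 ≤ n) (s : Fin n → α)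
    (j : ℕ) (hj2 : j ≤ n - 1) :
    iterL rc (j * (n - 1))
      (List.ofFn fun i : Fin n => (s i, if i.val = n - 2 then Ctl.p else Ctl.blank)) =
    some (List.ofFn fun i : Fin n =>
      (s ⟨(i.val + (n - j)) % n, Nat.mod_lt _ (by omega)⟩,
        if i.val = n - 2 then Ctl.p else Ctl.blank)) := by
  have h := iterL_mul_pulseConfig (List.ofFn s) (by simpa using hn) j
  rw [List.length_ofFn, ofFn_rotate, pulseConfig_ofFn, pulseConfig_ofFn] at h
  simpa only [add_mul_pred_mod _ (show j ≤ n by omega)] using h
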